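/- arXiv:math/0006197 — 3 statements merged into one kernel-verified Lean document; each statement's English description precedes it below -/
import Mathlib

section
/- If f : ω → ω is an injection such that for every α in an index set, f maps a_α into b_α modulo finite sets and maps ω \ a_α into ω \ b_α modulo finite sets, and g : ω → ω is an injection with the symmetric property (g maps b_α into a_α modulo finite, and ω \ b_α into ω \ a_α modulo finite), then there exists a permutation π of ω such that for every α, π(a_α) equals b_α modulo finite sets (i.e., the symmetric difference of π(a_α) and b_α is finite). -/
open Set Function

/-- Cantor–Schröder–Bernstein step of Lemma 1. -/
theorem stmt_0 {I : Type*} (a b : I → Set ℕ) (f g : ℕ → ℕ)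
    (hf : Function.Injective f) (hg : Function.Injective g)
    (hfa : ∀ α, (f '' a α \ b α).Finite)
    (hfc : ∀ α, (f '' (a α)ᶜ \ (b α)ᶜ).Finite)
    (hgb : ∀ α, (g '' b α \ a α).Finite)
    (hgc : ∀ α, (g '' (b α)ᶜ \ (a α)ᶜ).Finite) :
    ∃ π : Equiv.Perm ℕ, ∀ α, (symmDiff (π '' a α) (b α)).Finite := by
  classical
  set S : Set ℕ := ⋃ n, (g ∘ f)^[n] '' (Set.range g)ᶜ with hS
  set h : ℕ → ℕ := fun x => if x ∈ S then f x else Function.invFun g x with hh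
  have hgfS : ∀ x ∈ S, g (f x) ∈ S := by
    intro x hx
    obtain ⟨n, hn⟩ := mem_iUnion.1 hx
    obtain ⟨w, hw, rfl⟩ := hn
    exact mem_iUnion.2 ⟨n + 1, w, hw, by simp [Function.iterate_succ_apply']⟩
  have hnotS : ∀ x, x ∉ S → x ∈ Set.range g := by
    intro x hx
    by_contra hc
    exact hx (mem_iUnion.2 ⟨0, by simpa using hc⟩)
  have hginvS : ∀ x, x ∉ S → g (h x) = x := by
    intro x hx
    simp only [hh, if_neg hx]
    exact Function.invFun_eq (hnotS x hx)
  have key : ∀ x, h x = f x ∨ g (h x) = x := by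
    intro x
    by_cases hx : x ∈ S
    · left; simp [hh, hx]
    · right; exact hginvS x hx
  have hinj : Function.Injective h := by
    intro x y hxy
    by_cases hx : x ∈ S <;> by_cases hy : y ∈ S
    · exact hf (by simpa [hh, hx, hy] using hxy)
    · exfalso
      have h1 : g (h y) = y := hginvS y hy
      have h2 : g (f x) = y := by rw [← h1, ← hxy]; simp [hh, hx]
      exact hy (h2 ▸ hgfS x hx)
    · exfalso
      have h1 : g (h x) = x := hginvS x hx
      have h2 : g (f y) = x := by rw [← h1, hxy]; simp [hh, hy]
      exact hx (h2 ▸ hgfS y hy)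
    · exact (hginvS x hx).symm.trans (by rw [hxy]; exact hginvS y hy)
  have hsurj : Function.Surjective h := by
    intro y
    by_cases hy : y ∈ f '' S
    · obtain ⟨x, hx, rfl⟩ := hy
      exact ⟨x, by simp [hh, hx]⟩
    · refine ⟨g y, ?_⟩
      have hgy : g y ∉ S := by
        intro hgyS
        obtain ⟨n, hn⟩ := mem_iUnion.1 hgyS
        obtain ⟨w, hw, heq⟩ := hn
        match n, heq with
        | 0, heq =>
          simp only [Function.iterate_zero, id_eq] at heq
          exact hw (heq ▸ ⟨y, rfl⟩)
        | Nat.succ m, heq =>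
          rw [Function.iterate_succ_apply'] at heq
          have hu : (g ∘ f)^[m] w ∈ S := mem_iUnion.2 ⟨m, w, hw, rfl⟩
          have : f ((g ∘ f)^[m] w) = y := hg (by simpa using heq)
          exact hy ⟨(g ∘ f)^[m] w, hu, this⟩
      simp only [hh, if_neg hgy]
      exact Function.leftInverse_invFun hg y
  refine ⟨Equiv.ofBijective h ⟨hinj, hsurj⟩, fun α => ?_⟩
  have himg : (Equiv.ofBijective h ⟨hinj, hsurj⟩) '' (a α) = h '' a α := rfl
  rw [himg, Set.symmDiff_def]
  have h1 : h '' a α \ b α ⊆ (f '' a α \ b α) ∪ h '' (g '' (b α)ᶜ \ (a α)ᶜ) := by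
    rintro y ⟨⟨x, hxa, rfl⟩, hyb⟩
    rcases key x with heq | heq
    · exact Or.inl ⟨⟨x, hxa, heq.symm⟩, hyb⟩
    · exact Or.inr ⟨x, ⟨⟨h x, hyb, heq⟩, fun hc => hc hxa⟩, rfl⟩
  have h2 : b α \ h '' a α ⊆ (f '' (a α)ᶜ \ (b α)ᶜ) ∪ h '' (g '' b α \ a α) := by
    rintro y ⟨hyb, hyn⟩
    obtain ⟨x, rfl⟩ := hsurj y
    have hxa : x ∉ a α := fun hx => hyn ⟨x, hx, rfl⟩
    rcases key x with heq | heq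
    · exact Or.inl ⟨⟨x, hxa, heq.symm⟩, fun hc => hc hyb⟩
    · exact Or.inr ⟨x, ⟨⟨h x, hyb, heq⟩, hxa⟩, rfl⟩
  exact (((hfa α).union ((hgc α).image h)).subset h1).union
    (((hfc α).union ((hgb α).image h)).subset h2)
end

section
/- Let Y be a countable dense subset of a topological space D, fix a partition ω = ⋃_{y∈Y} ω_y of the natural numbers into infinitely many infinite pieces. Consider the subspace b_Y = (D × {ω}) ∪ ⋃_{y∈Y} ({y} × ω_y) of D × (ω+1), where ω+1 is the one-point compactification of discrete ω. Then: (a) the set ⋃_{y∈Y}({y} × ω_y) is a countable dense set of isolated points in b_Y; (b) if D is compact Hausdorff then b_Y is compact; (c) a point (x, ω) ∈ D × {ω} is the limit of a sequence from ⋃_{y∈Y}({y} × ω_y) if and only if x is the limit in D of a sequence from Y (in particular, if x ∈ Y then (x,ω) is such a limit). -/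
open Set Filter Topology OnePoint

private lemma coe_tendsto_infty' : Tendsto (fun n : ℕ => (n : OnePoint ℕ)) atTop (𝓝 ∞) := by
  have := OnePoint.tendsto_coe_infty (X := ℕ)
  rwa [coclosedCompact_eq_cocompact, cocompact_eq_cofinite, Nat.cofinite_eq_atTop] at this

private lemma isOpen_coe_singleton' (n : ℕ) :
    IsOpen ({((n : ℕ) : OnePoint ℕ)} : Set (OnePoint ℕ)) := by
  have : ({((n : ℕ) : OnePoint ℕ)} : Set (OnePoint ℕ))
      = (fun m : ℕ => (m : OnePoint ℕ)) '' {n} := by simp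
  rw [this]
  exact OnePoint.isOpen_image_coe.2 (isOpen_discrete _)

/-- Tkachuk's construction `b_Y ⊆ D × (ω+1)`. -/
theorem stmt_12 {D : Type*} [TopologicalSpace D]
    (Y : Set D) (hYc : Y.Countable) (hYd : Dense Y)
    (P : D → Set ℕ) (hPinf : ∀ y ∈ Y, (P y).Infinite)
    (hPdisj : ∀ y ∈ Y, ∀ y' ∈ Y, y ≠ y' → Disjoint (P y) (P y'))
    (hPcov : (⋃ y ∈ Y, P y) = Set.univ) :
    let E : Set (D × OnePoint ℕ) :=
      ⋃ y ∈ Y, {y} ×ˢ ((fun n : ℕ => (n : OnePoint ℕ)) '' P y)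
    let B : Set (D × OnePoint ℕ) := (Set.univ ×ˢ {(∞ : OnePoint ℕ)}) ∪ E
    -- (a) E is a countable set of isolated points of B, dense in B
    (E.Countable ∧ (∀ p ∈ E, ∃ U : Set (D × OnePoint ℕ), IsOpen U ∧ U ∩ B = {p}) ∧
      B ⊆ closure E) ∧
    -- (b) if D is compact Hausdorff then B is compact
    (CompactSpace D → T2Space D → IsCompact B) ∧
    -- (c) (x,∞) is a limit of a sequence from E iff x is a limit of a sequence from Y
    (∀ x : D,
      (∃ ξ : ℕ → D × OnePoint ℕ, (∀ n, ξ n ∈ E) ∧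
          Tendsto ξ atTop (𝓝 (x, (∞ : OnePoint ℕ)))) ↔
        ∃ η : ℕ → D, (∀ n, η n ∈ Y) ∧ Tendsto η atTop (𝓝 x)) := by
  intro E B
  have hmemE : ∀ p : D × OnePoint ℕ,
      p ∈ E ↔ ∃ y ∈ Y, ∃ n ∈ P y, p = (y, (n : OnePoint ℕ)) := by
    intro p
    simp only [E, mem_iUnion, mem_prod, mem_singleton_iff, mem_image]
    constructor
    · rintro ⟨y, hy, h1, ⟨n, hn, h2⟩⟩
      exact ⟨y, hy, n, hn, Prod.ext h1 h2.symm⟩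
    · rintro ⟨y, hy, n, hn, rfl⟩
      exact ⟨y, hy, rfl, n, hn, rfl⟩
  have hsame : ∀ {y y' : D} {n : ℕ}, y ∈ Y → y' ∈ Y → n ∈ P y → n ∈ P y' → y = y' := by
    intro y y' n hy hy' hn hn'
    by_contra hne
    exact (hPdisj y hy y' hy' hne).ne_of_mem hn hn' rfl
  refine ⟨⟨?_, ?_, ?_⟩, ?_, ?_⟩
  · -- countable
    exact hYc.biUnion fun y hy => (countable_singleton y).prod ((P y).to_countable.image _)
  · -- isolated
    rintro p hp
    obtain ⟨y, hy, n, hn, rfl⟩ := (hmemE p).1 hp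
    refine ⟨Set.univ ×ˢ {((n : ℕ) : OnePoint ℕ)}, isOpen_univ.prod (isOpen_coe_singleton' n), ?_⟩
    ext q
    simp only [mem_inter_iff, mem_prod, mem_univ, true_and, mem_singleton_iff]
    constructor
    · rintro ⟨hq2, hqB⟩
      rcases hqB with h | hqE
      · exact absurd (h.2.symm.trans hq2) (OnePoint.infty_ne_coe n)
      · obtain ⟨y', hy', m, hm, rfl⟩ := (hmemE q).1 hqE
        have hmn : m = n := by
          have h' : (m : OnePoint ℕ) = n := hq2
          exact_mod_cast h'
        subst hmn
        rw [hsame hy' hy hm hn]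
    · rintro rfl
      exact ⟨rfl, Or.inr hp⟩
  · -- dense
    rintro p hp
    rcases hp with h | hpE
    · obtain ⟨x, hx⟩ : ∃ x : D, p = (x, ∞) :=
        ⟨p.1, Prod.ext rfl (mem_singleton_iff.1 h.2)⟩
      subst hx
      rw [mem_closure_iff]
      intro o ho hpo
      obtain ⟨U, V, hU, hV, hxU, hiV, hUV⟩ := isOpen_prod_iff.1 ho x ∞ hpo
      obtain ⟨hVcl, hVcp⟩ := (OnePoint.isOpen_iff_of_mem hiV).1 hV
      have hVfin : (((↑) : ℕ → OnePoint ℕ) ⁻¹' V)ᶜ.Finite := isCompact_iff_finite.1 hVcp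
      obtain ⟨y, hyY, hyU⟩ := hYd.exists_mem_open hU ⟨x, hxU⟩
      obtain ⟨n, hn⟩ := ((hPinf y hyY).diff hVfin).nonempty
      refine ⟨(y, (n : OnePoint ℕ)), hUV ⟨hyU, not_not.1 hn.2⟩, ?_⟩
      exact (hmemE _).2 ⟨y, hyY, n, hn.1, rfl⟩
    · exact subset_closure hpE
  · -- compact
    intro hD hT2
    have hBclosed : IsClosed B := by
      rw [← isOpen_compl_iff]
      rw [isOpen_iff_forall_mem_open]
      rintro ⟨d, v⟩ hp
      have hv : v ≠ ∞ := by
        intro h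
        exact hp (Or.inl ⟨mem_univ _, by simp [h]⟩)
      obtain ⟨n, rfl⟩ := OnePoint.ne_infty_iff_exists.1 hv
      have hncov : (n : ℕ) ∈ ⋃ y ∈ Y, P y := hPcov ▸ mem_univ n
      obtain ⟨y, hy, hn⟩ := mem_iUnion₂.1 hncov
      have hdy : d ≠ y := by
        rintro rfl
        exact hp (Or.inr ((hmemE _).2 ⟨d, hy, n, hn, rfl⟩))
      refine ⟨{y}ᶜ ×ˢ {((n : ℕ) : OnePoint ℕ)}, ?_, ?_, ⟨hdy, rfl⟩⟩
      · rintro ⟨d', w⟩ ⟨hd', hw⟩ hmem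
        simp only [mem_singleton_iff] at hw
        subst hw
        rcases hmem with h | hE
        · exact (OnePoint.coe_ne_infty n) (mem_singleton_iff.1 h.2)
        · obtain ⟨y', hy', m, hm, heq⟩ := (hmemE _).1 hE
          have h1 : d' = y' := (Prod.ext_iff.1 heq).1
          have h2 : m = n := by
            have h' : ((n : ℕ) : OnePoint ℕ) = m := (Prod.ext_iff.1 heq).2
            exact_mod_cast h'.symm
          exact hd' (h1.trans (hsame hy' hy (h2 ▸ hm) hn))
      · exact (isOpen_compl_singleton).prod (isOpen_coe_singleton' n)
    exact hBclosed.isCompact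
  · -- (c)
    intro x
    constructor
    · rintro ⟨ξ, hξE, hξt⟩
      refine ⟨fun n => (ξ n).1, fun n => ?_, ?_⟩
      · obtain ⟨y, hy, m, hm, heq⟩ := (hmemE _).1 (hξE n)
        show (ξ n).1 ∈ Y
        rw [heq]; exact hy
      · exact (continuous_fst.tendsto _).comp hξt
    · rintro ⟨η, hηY, hηt⟩
      have hsel : ∀ n : ℕ, ∃ m ∈ P (η n), n < m := fun n => (hPinf _ (hηY n)).exists_gt n
      choose m hmP hmgt using hsel
      refine ⟨fun n => (η n, (m n : OnePoint ℕ)), fun n => (hmemE _).2 ⟨η n, hηY n, m n, hmP n, rfl⟩, ?_⟩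
      refine hηt.prodMk_nhds ?_
      exact coe_tendsto_infty'.comp (tendsto_atTop_mono (fun n => (hmgt n).le) tendsto_id)
end

section
/- Suppose π₀ : ω → ω satisfies: for all n, π₀(n) ∈ H_n, where H_n is a pseudointersection of {S_{n,α} : α ∈ I} (i.e., H_n \ S_{n,α} is finite for all α), S_{n,α} = b_α when n ∈ a_α and S_{n,α} = ω \ b_α when n ∉ a_α, and π₀ eventually dominates each function h_α(n) = min{m : H_n \ {0,…,m−1} ⊆ S_{n,α}}. Then for every α ∈ I: π₀(a_α) ⊆ b_α modulo finite sets and π₀(ω \ a_α) ⊆ ω \ b_α modulo finite sets. -/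
open Set Filter

/- Finiteness of `H \ T` makes `{m | H \ Iio m ⊆ T}` nonempty, so its `sInf` is a genuine
minimum rather than the junk value `0`. -/
theorem mem_of_sInf_le_of_diff_finite {H T : Set ℕ} (hfin : (H \ T).Finite) {x : ℕ}
    (hx : x ∈ H) (hle : sInf {m : ℕ | H \ Iio m ⊆ T} ≤ x) : x ∈ T := by
  have hne : {m : ℕ | H \ Iio m ⊆ T}.Nonempty := by
    obtain ⟨m, hm⟩ := hfin.bddAbove
    refine ⟨m + 1, fun y ⟨hyH, hyge⟩ => by_contra fun hyT => ?_⟩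
    have := hm ⟨hyH, hyT⟩
    simp only [mem_Iio, not_lt] at hyge
    omega
  exact Nat.sInf_mem hne ⟨hx, not_lt.mpr hle⟩

theorem finite_image_diff_of_eventually_cofinite {α β : Type*} {f : α → β} {A : Set α}
    {B : Set β} (h : ∀ᶠ n in cofinite, n ∈ A → f n ∈ B) : (f '' A \ B).Finite := by
  refine (h.image f).subset ?_
  rintro _ ⟨⟨n, hnA, rfl⟩, hnB⟩
  exact ⟨n, fun hn => hnB (hn hnA), rfl⟩

open Classical in
theorem stmt_18 {I : Type*} (a b : I → Set ℕ) (H : ℕ → Set ℕ)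
    (S : ℕ → I → Set ℕ)
    (hS : ∀ n α, S n α = if n ∈ a α then b α else (b α)ᶜ)
    (hpseudo : ∀ n α, (H n \ S n α).Finite)
    (π₀ : ℕ → ℕ) (hmem : ∀ n, π₀ n ∈ H n)
    (hdom : ∀ α : I, ∀ᶠ n in atTop,
      sInf {m : ℕ | H n \ Set.Iio m ⊆ S n α} ≤ π₀ n) :
    ∀ α : I, (π₀ '' a α \ b α).Finite ∧ (π₀ '' (a α)ᶜ \ (b α)ᶜ).Finite := by
  intro α
  have hmemS : ∀ᶠ n in cofinite, π₀ n ∈ S n α := by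
    rw [Nat.cofinite_eq_atTop]
    filter_upwards [hdom α] with n hn
    exact mem_of_sInf_le_of_diff_finite (hpseudo n α) (hmem n) hn
  constructor <;> refine finite_image_diff_of_eventually_cofinite ?_ <;>
    filter_upwards [hmemS] with n hn hna
  · simpa [hS, hna] using hn
  · simpa [hS, show n ∉ a α from hna] using hn
end
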